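/- (Necessity of axiom A5.) Let ν be a capacity on {1,2}, f₁ : X₁ → ℝ, f₂ : X₂ → ℝ, and let ≽ be the relation on X = X₁ × X₂ represented by ν together with (f₁,f₂). Let R⁺ = {x ∈ X : f₁(x₁) ≥ f₂(x₂)} and R⁻ = {x ∈ X : f₂(x₂) ≥ f₁(x₁)}; define the coordinate-1 weight of R⁺ to be ν({1}) and of R⁻ to be 1 − ν({2}), and the coordinate-2 weight of R⁺ to be 1 − ν({1}) and of R⁻ to be ν({2}). Let a,b,c,d,e,g,x₀,x₁ ∈ X₁ and p,q,y₀,y₁,πa,πb,πc,πd ∈ X₂ be such that: ap,bq,cp,dq all lie in R⁺ or all lie in R⁻, and the coordinate-1 weight of that region is strictly positive; ay₀,by₀,cy₁,dy₁ all lie in R⁺ or all lie in R⁻; x₀πa,x₀πb,x₁πc,x₁πd all lie in R⁺ or all lie in R⁻, and the coordinate-2 weight of that region is strictly positive; and eπa,gπb,eπc,gπd all lie in R⁺ or all lie in R⁻. If bq ≽ ap, cp ≽ dq, ay₀ ∼ x₀πa, by₀ ∼ x₀πb, cy₁ ∼ x₁πc, dy₁ ∼ x₁πd, and eπa ≽ gπb,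 then eπc ≽ gπd. -/

import Mathlib

open Set
open scoped Classical

section ChoquetAxioms

variable {X₁ X₂ : Type*}

/-- Asymmetric (strict) part of a relation. -/
def SP (R : X₁ × X₂ → X₁ × X₂ → Prop) (x y : X₁ × X₂) : Prop := R x y ∧ ¬ R y x

/-- Symmetric (indifference) part of a relation. -/
def IP (R : X₁ × X₂ → X₁ × X₂ → Prop) (x y : X₁ × X₂) : Prop := R x y ∧ R y x

/-- Triple cancellation on a set `A`. -/
def TCancel (R : X₁ × X₂ → X₁ × X₂ → Prop) (A : Set (X₁ × X₂)) : Prop :=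
  ∀ a b c d : X₁, ∀ p q r s : X₂,
    (a,p) ∈ A → (b,q) ∈ A → (a,r) ∈ A → (b,s) ∈ A →
    (c,p) ∈ A → (d,q) ∈ A → (c,r) ∈ A → (d,s) ∈ A →
    R (b,q) (a,p) → R (a,r) (b,s) → R (c,p) (d,q) → R (c,r) (d,s)

/-- A1: weak order (complete and transitive). -/
def A1 (R : X₁ × X₂ → X₁ × X₂ → Prop) : Prop :=
  (∀ x y, R x y ∨ R y x) ∧ (∀ x y z, R x y → R y z → R x z)

/-- A2: weak separability. -/
def A2 (R : X₁ × X₂ → X₁ × X₂ → Prop) : Prop :=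
  (∀ a b : X₁, ∀ p : X₂, SP R (a,p) (b,p) → ∀ q : X₂, R (a,q) (b,q)) ∧
  (∀ p q : X₂, ∀ a : X₁, SP R (a,p) (a,q) → ∀ b : X₁, R (b,p) (b,q))

/-- Induced order on the first coordinate. -/
def Ge1 (R : X₁ × X₂ → X₁ × X₂ → Prop) (a b : X₁) : Prop := ∀ p : X₂, R (a,p) (b,p)

/-- Induced order on the second coordinate. -/
def Ge2 (R : X₁ × X₂ → X₁ × X₂ → Prop) (p q : X₂) : Prop := ∀ a : X₁, R (a,p) (a,q)

def Max1 (R : X₁ × X₂ → X₁ × X₂ → Prop) (a : X₁) : Prop := ∀ b : X₁, Ge1 R a b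
def Min1 (R : X₁ × X₂ → X₁ × X₂ → Prop) (a : X₁) : Prop := ∀ b : X₁, Ge1 R b a
def Max2 (R : X₁ × X₂ → X₁ × X₂ → Prop) (p : X₂) : Prop := ∀ q : X₂, Ge2 R p q
def Min2 (R : X₁ × X₂ → X₁ × X₂ → Prop) (p : X₂) : Prop := ∀ q : X₂, Ge2 R q p

/-- The south-east rectangular cone at `z`. -/
def SEz (R : X₁ × X₂ → X₁ × X₂ → Prop) (z : X₁ × X₂) : Set (X₁ × X₂) :=
  {x | Ge1 R x.1 z.1 ∧ Ge2 R z.2 x.2}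

/-- The north-west rectangular cone at `z`. -/
def NWz (R : X₁ × X₂ → X₁ × X₂ → Prop) (z : X₁ × X₂) : Set (X₁ × X₂) :=
  {x | Ge2 R x.2 z.2 ∧ Ge1 R z.1 x.1}

/-- A3: at every point, triple cancellation holds on `SEz z` or on `NWz z`. -/
def A3 (R : X₁ × X₂ → X₁ × X₂ → Prop) : Prop :=
  ∀ z : X₁ × X₂, TCancel R (SEz R z) ∨ TCancel R (NWz R z)

/-- The region SE. -/
def SEreg (R : X₁ × X₂ → X₁ × X₂ → Prop) : Set (X₁ × X₂) :=
  {x | (∃ z : X₁ × X₂, ¬ Max1 R z.1 ∧ ¬ Min2 R z.2 ∧ TCancel R (SEz R z) ∧ x ∈ SEz R z) ∨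
       ((Max1 R x.1 ∨ Min2 R x.2) ∧ ∀ y ∈ SEz R x, y ≠ x → ¬ TCancel R (NWz R y))}

/-- The region NW. -/
def NWreg (R : X₁ × X₂ → X₁ × X₂ → Prop) : Set (X₁ × X₂) :=
  {x | (∃ z : X₁ × X₂, ¬ Min1 R z.1 ∧ ¬ Max2 R z.2 ∧ TCancel R (NWz R z) ∧ x ∈ NWz R z) ∨
       ((Min1 R x.1 ∨ Max2 R x.2) ∧ ∀ y ∈ NWz R x, y ≠ x → ¬ TCancel R (SEz R y))}

/-- Θ = SE ∩ NW. -/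
def Theta (R : X₁ × X₂ → X₁ × X₂ → Prop) : Set (X₁ × X₂) := SEreg R ∩ NWreg R

/-- Extreme points of SE. -/
def SEext (R : X₁ × X₂ → X₁ × X₂ → Prop) : Set (X₁ × X₂) :=
  {x | x ∈ Theta R ∧ (Min2 R x.2 ∨ Max1 R x.1)}

/-- Extreme points of NW. -/
def NWext (R : X₁ × X₂ → X₁ × X₂ → Prop) : Set (X₁ × X₂) :=
  {x | x ∈ Theta R ∧ (Min1 R x.1 ∨ Max2 R x.2)}

/-- Coordinate 1 is essential on `A`. -/
def Ess1 (R : X₁ × X₂ → X₁ × X₂ → Prop) (A : Set (X₁ × X₂)) : Prop :=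
  ∃ a b : X₁, ∃ p : X₂, (a,p) ∈ A ∧ (b,p) ∈ A ∧ SP R (a,p) (b,p)

/-- Coordinate 2 is essential on `A`. -/
def Ess2 (R : X₁ × X₂ → X₁ × X₂ → Prop) (A : Set (X₁ × X₂)) : Prop :=
  ∃ p q : X₂, ∃ a : X₁, (a,p) ∈ A ∧ (a,q) ∈ A ∧ SP R (a,p) (a,q)

/-- Four points all belonging to a set. -/
def In4 (A : Set (X₁ × X₂)) (w x y z : X₁ × X₂) : Prop :=
  w ∈ A ∧ x ∈ A ∧ y ∈ A ∧ z ∈ A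

/-- A4. -/
def A4 (R : X₁ × X₂ → X₁ × X₂ → Prop) : Prop :=
  ∀ a b c d : X₁, ∀ p q r s : X₂,
    ((In4 (NWreg R) (a,p) (b,q) (a,r) (b,s) ∧ In4 (NWreg R) (c,p) (d,q) (c,r) (d,s)) ∨
     (In4 (SEreg R) (a,p) (b,q) (a,r) (b,s) ∧ In4 (SEreg R) (c,p) (d,q) (c,r) (d,s)) ∨
     (In4 (NWreg R) (a,p) (b,q) (a,r) (b,s) ∧ Ess2 R (NWreg R) ∧
        In4 (SEreg R) (c,p) (d,q) (c,r) (d,s)) ∨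
     (In4 (SEreg R) (a,p) (b,q) (a,r) (b,s) ∧ Ess2 R (SEreg R) ∧
        In4 (NWreg R) (c,p) (d,q) (c,r) (d,s)) ∨
     (In4 (NWreg R) (a,p) (b,q) (c,p) (d,q) ∧ Ess1 R (NWreg R) ∧
        In4 (SEreg R) (a,r) (b,s) (c,r) (d,s)) ∨
     (In4 (SEreg R) (a,p) (b,q) (c,p) (d,q) ∧ Ess1 R (SEreg R) ∧
        In4 (NWreg R) (a,r) (b,s) (c,r) (d,s))) →
    R (b,q) (a,p) → R (a,r) (b,s) → R (c,p) (d,q) → R (c,r) (d,s)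

/-- One half of A5 (stated for the given coordinate order). -/
def A5half (R : X₁ × X₂ → X₁ × X₂ → Prop) : Prop :=
  ∀ a b c d e g x₀ x₁ : X₁, ∀ p q y₀ y₁ πa πb πc πd : X₂,
    ((In4 (NWreg R) (a,p) (b,q) (c,p) (d,q) ∧ Ess1 R (NWreg R)) ∨
     (In4 (SEreg R) (a,p) (b,q) (c,p) (d,q) ∧ Ess1 R (SEreg R))) →
    (In4 (NWreg R) (a,y₀) (b,y₀) (c,y₁) (d,y₁) ∨
     In4 (SEreg R) (a,y₀) (b,y₀) (c,y₁) (d,y₁)) →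
    ((In4 (NWreg R) (x₀,πa) (x₀,πb) (x₁,πc) (x₁,πd) ∧ Ess2 R (NWreg R)) ∨
     (In4 (SEreg R) (x₀,πa) (x₀,πb) (x₁,πc) (x₁,πd) ∧ Ess2 R (SEreg R))) →
    (In4 (NWreg R) (e,πa) (g,πb) (e,πc) (g,πd) ∨
     In4 (SEreg R) (e,πa) (g,πb) (e,πc) (g,πd)) →
    R (b,q) (a,p) → R (c,p) (d,q) →
    IP R (a,y₀) (x₀,πa) → IP R (b,y₀) (x₀,πb) →
    IP R (c,y₁) (x₁,πc) → IP R (d,y₁) (x₁,πd) →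
    R (e,πa) (g,πb) → R (e,πc) (g,πd)

/-- The relation with the roles of the two coordinates exchanged. -/
def swapRel (R : X₁ × X₂ → X₁ × X₂ → Prop) : X₂ × X₁ → X₂ × X₁ → Prop :=
  fun x y => R (x.2, x.1) (y.2, y.1)

/-- A5 : the condition together with its symmetric (coordinate-exchanged) version. -/
def A5 (R : X₁ × X₂ → X₁ × X₂ → Prop) : Prop :=
  A5half R ∧ A5half (swapRel R)

/-- A6 : bi-independence. -/
def A6 (R : X₁ × X₂ → X₁ × X₂ → Prop) : Prop :=
  (∀ a b c d : X₁, ∀ p : X₂,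
    (In4 (SEreg R) (a,p) (b,p) (c,p) (d,p) ∨ In4 (NWreg R) (a,p) (b,p) (c,p) (d,p)) →
    SP R (a,p) (b,p) → (∃ q : X₂, SP R (c,q) (d,q)) → SP R (c,p) (d,p)) ∧
  (∀ p q r s : X₂, ∀ a : X₁,
    (In4 (SEreg R) (a,p) (a,q) (a,r) (a,s) ∨ In4 (NWreg R) (a,p) (a,q) (a,r) (a,s)) →
    SP R (a,p) (a,q) → (∃ b : X₁, SP R (b,r) (b,s)) → SP R (a,r) (a,s))

/-- A7 : both coordinates are essential on X. -/
def A7 (R : X₁ × X₂ → X₁ × X₂ → Prop) : Prop :=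
  Ess1 R Set.univ ∧ Ess2 R Set.univ

/-- A8 : restricted solvability. -/
def A8 (R : X₁ × X₂ → X₁ × X₂ → Prop) : Prop :=
  (∀ a : X₁, ∀ p r : X₂, ∀ y : X₁ × X₂,
    R (a,p) y → R y (a,r) → ∃ b : X₂, IP R (a,b) y) ∧
  (∀ p : X₂, ∀ a c : X₁, ∀ y : X₁ × X₂,
    R (a,p) y → R y (c,p) → ∃ b : X₁, IP R (b,p) y)

/-- `S` is an interval of integers. -/
def IsIntervalZ (S : Set ℤ) : Prop :=
  ∀ i j k : ℤ, i ≤ j → j ≤ k → i ∈ S → k ∈ S → j ∈ S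

/-- Standard sequence on X₁. -/
def StdSeq1 (R : X₁ × X₂ → X₁ × X₂ → Prop) (S : Set ℤ) (g : ℤ → X₁) (y₀ y₁ : X₂) : Prop :=
  IsIntervalZ S ∧ ¬ (Ge2 R y₀ y₁ ∧ Ge2 R y₁ y₀) ∧
  ∀ i, i ∈ S → (i+1) ∈ S → IP R (g i, y₀) (g (i+1), y₁)

def BoundedSeq1 (R : X₁ × X₂ → X₁ × X₂ → Prop) (S : Set ℤ) (g : ℤ → X₁) (y₀ : X₂) : Prop :=
  ∃ u v : X₁ × X₂, ∀ i ∈ S, R u (g i, y₀) ∧ R (g i, y₀) v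

/-- Standard sequence on X₂. -/
def StdSeq2 (R : X₁ × X₂ → X₁ × X₂ → Prop) (S : Set ℤ) (h : ℤ → X₂) (x₀ x₁ : X₁) : Prop :=
  IsIntervalZ S ∧ ¬ (Ge1 R x₀ x₁ ∧ Ge1 R x₁ x₀) ∧
  ∀ i, i ∈ S → (i+1) ∈ S → IP R (x₀, h i) (x₁, h (i+1))

def BoundedSeq2 (R : X₁ × X₂ → X₁ × X₂ → Prop) (S : Set ℤ) (h : ℤ → X₂) (x₀ : X₁) : Prop :=
  ∃ u v : X₁ × X₂, ∀ i ∈ S, R u (x₀, h i) ∧ R (x₀, h i) v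

/-- A9 : Archimedean axiom. -/
def A9 (R : X₁ × X₂ → X₁ × X₂ → Prop) : Prop :=
  (∀ z ∈ NWreg R, ∀ (S : Set ℤ) (g : ℤ → X₁) (y₀ y₁ : X₂),
    StdSeq1 R S g y₀ y₁ → BoundedSeq1 R S g y₀ →
    (∀ i ∈ S, (g i, y₀) ∈ NWz R z ∧ (g i, y₁) ∈ NWz R z) → S.Finite) ∧
  (∀ z ∈ SEreg R, ∀ (S : Set ℤ) (g : ℤ → X₁) (y₀ y₁ : X₂),
    StdSeq1 R S g y₀ y₁ → BoundedSeq1 R S g y₀ →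
    (∀ i ∈ S, (g i, y₀) ∈ SEz R z ∧ (g i, y₁) ∈ SEz R z) → S.Finite) ∧
  (∀ z ∈ NWreg R, ∀ (S : Set ℤ) (h : ℤ → X₂) (x₀ x₁ : X₁),
    StdSeq2 R S h x₀ x₁ → BoundedSeq2 R S h x₀ →
    (∀ i ∈ S, (x₀, h i) ∈ NWz R z ∧ (x₁, h i) ∈ NWz R z) → S.Finite) ∧
  (∀ z ∈ SEreg R, ∀ (S : Set ℤ) (h : ℤ → X₂) (x₀ x₁ : X₁),
    StdSeq2 R S h x₀ x₁ → BoundedSeq2 R S h x₀ →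
    (∀ i ∈ S, (x₀, h i) ∈ SEz R z ∧ (x₁, h i) ∈ SEz R z) → S.Finite)

/-- Structural assumption. -/
def Structural (R : X₁ × X₂ → X₁ × X₂ → Prop) : Prop :=
  (∀ a b : X₁, a ≠ b → ¬ ∀ p : X₂, IP R (a,p) (b,p)) ∧
  (∀ p q : X₂, p ≠ q → ¬ ∀ a : X₁, IP R (a,p) (a,q))

/-- Order density. -/
def OrderDense (R : X₁ × X₂ → X₁ × X₂ → Prop) : Prop :=
  ∀ x y : X₁ × X₂, SP R x y → ∃ z : X₁ × X₂, SP R x z ∧ SP R z y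

/-- Closedness of SE and NW. -/
def Closedness (R : X₁ × X₂ → X₁ × X₂ → Prop) : Prop :=
  (∀ a b : X₁, ∀ p : X₂, (a,p) ∉ NWreg R → (b,p) ∉ SEreg R →
    ∃ c : X₁, (c,p) ∈ Theta R) ∧
  (∀ a : X₁, ∀ p q : X₂, (a,p) ∉ NWreg R → (a,q) ∉ SEreg R →
    ∃ r : X₂, (a,r) ∈ Theta R)

/-- A capacity on the two-element set (coordinate 1 ↦ `0`, coordinate 2 ↦ `1`). -/
structure Capacity where
  ν : Set (Fin 2) → ℝ
  empty' : ν ∅ = 0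
  mono' : ∀ A B : Set (Fin 2), A ⊆ B → ν A ≤ ν B
  norm' : ν Set.univ = 1

/-- Two-point Choquet integral. -/
noncomputable def Choq (c : Capacity) (t₁ t₂ : ℝ) : ℝ :=
  if t₂ ≤ t₁ then c.ν {0} * t₁ + (1 - c.ν {0}) * t₂
  else (1 - c.ν {1}) * t₁ + c.ν {1} * t₂

/-- `ν` together with `(f₁, f₂)` represents `R`. -/
def Represents (c : Capacity) (f₁ : X₁ → ℝ) (f₂ : X₂ → ℝ)
    (R : X₁ × X₂ → X₁ × X₂ → Prop) : Prop :=
  ∀ x y : X₁ × X₂, R x y ↔ Choq c (f₁ y.1) (f₂ y.2) ≤ Choq c (f₁ x.1) (f₂ x.2)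

/-- `(V₁, V₂)` additively represents `R` on `A`. -/
def AddRep (R : X₁ × X₂ → X₁ × X₂ → Prop) (V₁ : X₁ → ℝ) (V₂ : X₂ → ℝ)
    (A : Set (X₁ × X₂)) : Prop :=
  ∀ x ∈ A, ∀ y ∈ A, (R x y ↔ V₁ y.1 + V₂ y.2 ≤ V₁ x.1 + V₂ x.2)

/-- `Φ` represents `R` on `A`. -/
def RepOn (R : X₁ × X₂ → X₁ × X₂ → Prop) (Φ : X₁ × X₂ → ℝ) (A : Set (X₁ × X₂)) : Prop :=
  ∀ x ∈ A, ∀ y ∈ A, (R x y ↔ Φ y ≤ Φ x)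

/-- `S` union of non-extreme SE cones. -/
def SEstar (R : X₁ × X₂ → X₁ × X₂ → Prop) : Set (X₁ × X₂) :=
  ⋃ z ∈ Theta R \ SEext R, SEz R z

/-- Union of non-extreme NW cones. -/
def NWstar (R : X₁ × X₂ → X₁ × X₂ → Prop) : Set (X₁ × X₂) :=
  ⋃ z ∈ Theta R \ NWext R, NWz R z

/-- First coordinates appearing both in `SEstar` and `NWstar`. -/
def D1 (R : X₁ × X₂ → X₁ × X₂ → Prop) : Set X₁ :=
  {a | (∃ p : X₂, (a,p) ∈ SEstar R) ∧ (∃ q : X₂, (a,q) ∈ NWstar R)}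

/-- Second coordinates appearing both in `SEstar` and `NWstar`. -/
def D2 (R : X₁ × X₂ → X₁ × X₂ → Prop) : Set X₂ :=
  {p | (∃ a : X₁, (a,p) ∈ SEstar R) ∧ (∃ b : X₁, (b,p) ∈ NWstar R)}

end ChoquetAxioms

/-!
On each of the two comonotone half-planes `f₂ ≤ f₁` and `f₁ ≤ f₂` the Choquet integral is a
weighted sum `w₁ f₁ + w₂ f₂` with nonnegative weights. Adding `bq ≽ ap` and `cp ≽ dq` in one
half-plane gives `w₁ (f₁ a + f₁ d) ≤ w₁ (f₁ b + f₁ c)`, hence `f₁ a + f₁ d ≤ f₁ b + f₁ c` as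
`w₁ > 0`. The alternating sum of the four indifferences transports this to
`f₂ πa + f₂ πd ≤ f₂ πb + f₂ πc`, dividing by the positive coordinate-2 weight. In the half-plane
containing `eπa, gπb, eπc, gπd` this inequality turns `eπa ≽ gπb` into `eπc ≽ gπd`.
-/

namespace Capacity

lemma nonneg (m : Capacity) (A : Set (Fin 2)) : 0 ≤ m.ν A :=
  m.empty' ▸ m.mono' ∅ A (empty_subset A)

lemma le_one (m : Capacity) (A : Set (Fin 2)) : m.ν A ≤ 1 :=
  m.norm' ▸ m.mono' A univ (subset_univ A)

end Capacity

lemma Choq_eq_of_le (m : Capacity) {t₁ t₂ : ℝ} (h : t₂ ≤ t₁) :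
    Choq m t₁ t₂ = m.ν {0} * t₁ + (1 - m.ν {0}) * t₂ :=
  if_pos h

lemma Choq_eq_of_ge (m : Capacity) {t₁ t₂ : ℝ} (h : t₁ ≤ t₂) :
    Choq m t₁ t₂ = (1 - m.ν {1}) * t₁ + m.ν {1} * t₂ := by
  unfold Choq
  split_ifs with h'
  · obtain rfl : t₁ = t₂ := le_antisymm h h'
    ring
  · rfl

section LinearRegion

variable {X₁ X₂ : Type*} {m : Capacity} {f₁ : X₁ → ℝ} {f₂ : X₂ → ℝ}

lemma In4.mono {A B : Set (X₁ × X₂)} (hAB : A ⊆ B) {x y z t : X₁ × X₂}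
    (h : In4 A x y z t) : In4 B x y z t :=
  ⟨hAB h.1, hAB h.2.1, hAB h.2.2.1, hAB h.2.2.2⟩

def linearRegion (m : Capacity) (f₁ : X₁ → ℝ) (f₂ : X₂ → ℝ) (w₁ w₂ : ℝ) : Set (X₁ × X₂) :=
  {x | Choq m (f₁ x.1) (f₂ x.2) = w₁ * f₁ x.1 + w₂ * f₂ x.2}

lemma setOf_le_subset_linearRegion :
    {x : X₁ × X₂ | f₂ x.2 ≤ f₁ x.1} ⊆ linearRegion m f₁ f₂ (m.ν {0}) (1 - m.ν {0}) :=
  fun _ hx => Choq_eq_of_le m hx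

lemma setOf_ge_subset_linearRegion :
    {x : X₁ × X₂ | f₁ x.1 ≤ f₂ x.2} ⊆ linearRegion m f₁ f₂ (1 - m.ν {1}) (m.ν {1}) :=
  fun _ hx => Choq_eq_of_ge m hx

lemma exists_nonneg_weights_of_In4 {P : ℝ → ℝ → Prop} {x y z t : X₁ × X₂}
    (h : (In4 {x : X₁ × X₂ | f₂ x.2 ≤ f₁ x.1} x y z t ∧ P (m.ν {0}) (1 - m.ν {0})) ∨
      (In4 {x : X₁ × X₂ | f₁ x.1 ≤ f₂ x.2} x y z t ∧ P (1 - m.ν {1}) (m.ν {1}))) :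
    ∃ w₁ w₂, 0 ≤ w₁ ∧ 0 ≤ w₂ ∧ P w₁ w₂ ∧ In4 (linearRegion m f₁ f₂ w₁ w₂) x y z t := by
  rcases h with ⟨h, hP⟩ | ⟨h, hP⟩
  · exact ⟨_, _, m.nonneg _, sub_nonneg.2 (m.le_one _), hP, h.mono setOf_le_subset_linearRegion⟩
  · exact ⟨_, _, sub_nonneg.2 (m.le_one _), m.nonneg _, hP, h.mono setOf_ge_subset_linearRegion⟩

lemma exists_nonneg_weights_of_In4_or {x y z t : X₁ × X₂}
    (h : In4 {x : X₁ × X₂ | f₂ x.2 ≤ f₁ x.1} x y z t ∨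
      In4 {x : X₁ × X₂ | f₁ x.1 ≤ f₂ x.2} x y z t) :
    ∃ w₁ w₂, 0 ≤ w₁ ∧ 0 ≤ w₂ ∧ In4 (linearRegion m f₁ f₂ w₁ w₂) x y z t := by
  obtain ⟨w₁, w₂, hw₁, hw₂, -, h⟩ :=
    exists_nonneg_weights_of_In4 (P := fun _ _ => True) (h.imp (⟨·, trivial⟩) (⟨·, trivial⟩))
  exact ⟨w₁, w₂, hw₁, hw₂, h⟩

end LinearRegion

namespace Represents

variable {X₁ X₂ : Type*} {m : Capacity} {f₁ : X₁ → ℝ} {f₂ : X₂ → ℝ}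
  {R : X₁ × X₂ → X₁ × X₂ → Prop}

lemma iff_of_mem_linearRegion (hrep : Represents m f₁ f₂ R) {w₁ w₂ : ℝ} {x y : X₁ × X₂}
    (hx : x ∈ linearRegion m f₁ f₂ w₁ w₂) (hy : y ∈ linearRegion m f₁ f₂ w₁ w₂) :
    R x y ↔ w₁ * f₁ y.1 + w₂ * f₂ y.2 ≤ w₁ * f₁ x.1 + w₂ * f₂ x.2 := by
  rw [hrep x y, ← hx, ← hy]

lemma eq_of_IP_of_mem_linearRegion (hrep : Represents m f₁ f₂ R) {u₁ u₂ v₁ v₂ : ℝ}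
    {x y : X₁ × X₂} (hx : x ∈ linearRegion m f₁ f₂ u₁ u₂) (hy : y ∈ linearRegion m f₁ f₂ v₁ v₂)
    (H : IP R x y) : u₁ * f₁ x.1 + u₂ * f₂ x.2 = v₁ * f₁ y.1 + v₂ * f₂ y.2 := by
  rw [← hx, ← hy]
  exact le_antisymm ((hrep y x).1 H.2) ((hrep x y).1 H.1)

lemma f₁_add_le_f₁_add (hrep : Represents m f₁ f₂ R) {w₁ w₂ : ℝ} (hw₁ : 0 < w₁)
    {a b c d : X₁} {p q : X₂} (hW : In4 (linearRegion m f₁ f₂ w₁ w₂) (a,p) (b,q) (c,p) (d,q))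
    (H₁ : R (b,q) (a,p)) (H₂ : R (c,p) (d,q)) :
    f₁ a + f₁ d ≤ f₁ b + f₁ c := by
  obtain ⟨hap, hbq, hcp, hdq⟩ := hW
  have h₁ := (hrep.iff_of_mem_linearRegion hbq hap).1 H₁
  have h₂ := (hrep.iff_of_mem_linearRegion hcp hdq).1 H₂
  refine le_of_mul_le_mul_left ?_ hw₁
  linarith

lemma f₂_add_le_f₂_add (hrep : Represents m f₁ f₂ R) {u₁ u₂ v₁ v₂ : ℝ} (hu₁ : 0 ≤ u₁)
    (hv₂ : 0 < v₂) {a b c d x₀ x₁ : X₁} {y₀ y₁ πa πb πc πd : X₂}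
    (hU : In4 (linearRegion m f₁ f₂ u₁ u₂) (a,y₀) (b,y₀) (c,y₁) (d,y₁))
    (hV : In4 (linearRegion m f₁ f₂ v₁ v₂) (x₀,πa) (x₀,πb) (x₁,πc) (x₁,πd))
    (hf₁ : f₁ a + f₁ d ≤ f₁ b + f₁ c)
    (H₃ : IP R (a,y₀) (x₀,πa)) (H₄ : IP R (b,y₀) (x₀,πb))
    (H₅ : IP R (c,y₁) (x₁,πc)) (H₆ : IP R (d,y₁) (x₁,πd)) :
    f₂ πa + f₂ πd ≤ f₂ πb + f₂ πc := by
  obtain ⟨hay, hby, hcy, hdy⟩ := hU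
  obtain ⟨hπa, hπb, hπc, hπd⟩ := hV
  have e₃ := hrep.eq_of_IP_of_mem_linearRegion hay hπa H₃
  have e₄ := hrep.eq_of_IP_of_mem_linearRegion hby hπb H₄
  have e₅ := hrep.eq_of_IP_of_mem_linearRegion hcy hπc H₅
  have e₆ := hrep.eq_of_IP_of_mem_linearRegion hdy hπd H₆
  -- the alternating sum of the indifferences cancels the `y₀, y₁` and `x₀, x₁` terms
  have hsum : v₂ * (f₂ πb + f₂ πc - (f₂ πa + f₂ πd)) = u₁ * (f₁ b + f₁ c - (f₁ a + f₁ d)) := by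
    linear_combination e₃ - e₄ + e₆ - e₅
  have hnonneg : 0 ≤ v₂ * (f₂ πb + f₂ πc - (f₂ πa + f₂ πd)) :=
    hsum ▸ mul_nonneg hu₁ (sub_nonneg.2 hf₁)
  linarith [(mul_nonneg_iff_of_pos_left hv₂).1 hnonneg]

lemma rel_of_f₂_add_le_f₂_add (hrep : Represents m f₁ f₂ R) {w₁ w₂ : ℝ} (hw₂ : 0 ≤ w₂)
    {e g : X₁} {πa πb πc πd : X₂}
    (hW : In4 (linearRegion m f₁ f₂ w₁ w₂) (e,πa) (g,πb) (e,πc) (g,πd))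
    (hf₂ : f₂ πa + f₂ πd ≤ f₂ πb + f₂ πc) (H₇ : R (e,πa) (g,πb)) :
    R (e,πc) (g,πd) := by
  obtain ⟨hea, hgb, hec, hgd⟩ := hW
  have h₇ := (hrep.iff_of_mem_linearRegion hea hgb).1 H₇
  refine (hrep.iff_of_mem_linearRegion hec hgd).2 ?_
  linarith [mul_le_mul_of_nonneg_left hf₂ hw₂]

end Represents

theorem A5_necessary_general {X₁ X₂ : Type*}
    (m : Capacity) (f₁ : X₁ → ℝ) (f₂ : X₂ → ℝ)
    (R : X₁ × X₂ → X₁ × X₂ → Prop) (hrep : Represents m f₁ f₂ R)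
    (a b c d e g x₀ x₁ : X₁) (p q y₀ y₁ πa πb πc πd : X₂)
    (hg1 : (In4 {x : X₁ × X₂ | f₂ x.2 ≤ f₁ x.1} (a,p) (b,q) (c,p) (d,q) ∧
              0 < m.ν {0}) ∨
           (In4 {x : X₁ × X₂ | f₁ x.1 ≤ f₂ x.2} (a,p) (b,q) (c,p) (d,q) ∧
              0 < 1 - m.ν {1}))
    (hg2 : In4 {x : X₁ × X₂ | f₂ x.2 ≤ f₁ x.1} (a,y₀) (b,y₀) (c,y₁) (d,y₁) ∨
           In4 {x : X₁ × X₂ | f₁ x.1 ≤ f₂ x.2} (a,y₀) (b,y₀) (c,y₁) (d,y₁))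
    (hg3 : (In4 {x : X₁ × X₂ | f₂ x.2 ≤ f₁ x.1} (x₀,πa) (x₀,πb) (x₁,πc) (x₁,πd) ∧
              0 < 1 - m.ν {0}) ∨
           (In4 {x : X₁ × X₂ | f₁ x.1 ≤ f₂ x.2} (x₀,πa) (x₀,πb) (x₁,πc) (x₁,πd) ∧
              0 < m.ν {1}))
    (hg4 : In4 {x : X₁ × X₂ | f₂ x.2 ≤ f₁ x.1} (e,πa) (g,πb) (e,πc) (g,πd) ∨
           In4 {x : X₁ × X₂ | f₁ x.1 ≤ f₂ x.2} (e,πa) (g,πb) (e,πc) (g,πd))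
    (H1 : R (b,q) (a,p)) (H2 : R (c,p) (d,q))
    (H3 : IP R (a,y₀) (x₀,πa)) (H4 : IP R (b,y₀) (x₀,πb))
    (H5 : IP R (c,y₁) (x₁,πc)) (H6 : IP R (d,y₁) (x₁,πd))
    (H7 : R (e,πa) (g,πb)) :
    R (e,πc) (g,πd) := by
  obtain ⟨w₁, w₂, -, -, hw₁, hW⟩ := exists_nonneg_weights_of_In4 (P := fun w _ => 0 < w) hg1
  obtain ⟨u₁, u₂, hu₁, -, hU⟩ := exists_nonneg_weights_of_In4_or hg2
  obtain ⟨v₁, v₂, -, -, hv₂, hV⟩ := exists_nonneg_weights_of_In4 (P := fun _ w => 0 < w) hg3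
  obtain ⟨s₁, s₂, -, hs₂, hS⟩ := exists_nonneg_weights_of_In4_or hg4
  have hf₁ := hrep.f₁_add_le_f₁_add hw₁ hW H1 H2
  have hf₂ := hrep.f₂_add_le_f₂_add hu₁ hv₂ hU hV hf₁ H3 H4 H5 H6
  exact hrep.rel_of_f₂_add_le_f₂_add hs₂ hS hf₂ H7

/-- Necessity of axiom A5 for the Choquet representation. -/
theorem A5_necessary {X₁ X₂ : Type*} [Nonempty X₁] [Nonempty X₂]
    (m : Capacity) (f₁ : X₁ → ℝ) (f₂ : X₂ → ℝ)
    (R : X₁ × X₂ → X₁ × X₂ → Prop) (hrep : Represents m f₁ f₂ R)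
    (a b c d e g x₀ x₁ : X₁) (p q y₀ y₁ πa πb πc πd : X₂)
    (hg1 : (In4 {x : X₁ × X₂ | f₂ x.2 ≤ f₁ x.1} (a,p) (b,q) (c,p) (d,q) ∧
              0 < m.ν {0}) ∨
           (In4 {x : X₁ × X₂ | f₁ x.1 ≤ f₂ x.2} (a,p) (b,q) (c,p) (d,q) ∧
              0 < 1 - m.ν {1}))
    (hg2 : In4 {x : X₁ × X₂ | f₂ x.2 ≤ f₁ x.1} (a,y₀) (b,y₀) (c,y₁) (d,y₁) ∨
           In4 {x : X₁ × X₂ | f₁ x.1 ≤ f₂ x.2} (a,y₀) (b,y₀) (c,y₁) (d,y₁))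
    (hg3 : (In4 {x : X₁ × X₂ | f₂ x.2 ≤ f₁ x.1} (x₀,πa) (x₀,πb) (x₁,πc) (x₁,πd) ∧
              0 < 1 - m.ν {0}) ∨
           (In4 {x : X₁ × X₂ | f₁ x.1 ≤ f₂ x.2} (x₀,πa) (x₀,πb) (x₁,πc) (x₁,πd) ∧
              0 < m.ν {1}))
    (hg4 : In4 {x : X₁ × X₂ | f₂ x.2 ≤ f₁ x.1} (e,πa) (g,πb) (e,πc) (g,πd) ∨
           In4 {x : X₁ × X₂ | f₁ x.1 ≤ f₂ x.2} (e,πa) (g,πb) (e,πc) (g,πd))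
    (H1 : R (b,q) (a,p)) (H2 : R (c,p) (d,q))
    (H3 : IP R (a,y₀) (x₀,πa)) (H4 : IP R (b,y₀) (x₀,πb))
    (H5 : IP R (c,y₁) (x₁,πc)) (H6 : IP R (d,y₁) (x₁,πd))
    (H7 : R (e,πa) (g,πb)) :
    R (e,πc) (g,πd) :=
  A5_necessary_general m f₁ f₂ R hrep a b c d e g x₀ x₁ p q y₀ y₁ πa πb πc πd hg1 hg2 hg3 hg4 H1 H2
    H3 H4 H5 H6 H7
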